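/- Suppose R is a von Neumann regular ring and α is an action of a group G on R by ring automorphisms such that the identity is the only element g of G for which α(g) is a corner-inner automorphism. Then the skew group ring R*_α G is a simple ring if and only if R is G-simple. -/

import Mathlib

/-- `S` is a skew group ring `R*_α G`: the ring hom `ι : R →+* S` and the monoid hom
`σ : G →* S` realize `R` and `G` inside `S`, every element of `S` is uniquely a finite
sum `∑_g ι(r_g) * σ(g)` (so `S` is a free left `R`-module with basis the image of `G`),
and multiplication is twisted by the action: `σ(g) * ι(r) = ι(α(g)(r)) * σ(g)`. -/
structure IsSkewGroupRing (R : Type*) [Ring R] (G : Type*) [Group G]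
    (α : G →* RingAut R) (S : Type*) [Ring S] (ι : R →+* S) (σ : G →* S) : Prop where
  repr_existsUnique : ∀ s : S, ∃! c : G →₀ R, s = c.sum fun g r => ι r * σ g
  commutes : ∀ (g : G) (r : R), σ g * ι r = ι (α g r) * σ g

/-- `R` is `G`-simple (with respect to the action `α : G →* RingAut R`): `R` is nonzero
and the only `G`-invariant two-sided ideals of `R` are `0` and `R`. -/
def IsGSimple (R : Type*) [Ring R] {G : Type*} [Group G] (α : G →* RingAut R) : Prop :=
  Nontrivial R ∧
    ∀ I : TwoSidedIdeal R, (∀ (g : G), ∀ r ∈ I, α g r ∈ I) → I = ⊥ ∨ I = ⊤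

/-- An automorphism `f` of `R` is corner-inner if there is a nonzero idempotent `e ∈ R`
such that, with `e' = f⁻¹(e)`, there exist `u ∈ eRe'` and `v ∈ e'Re` with `uv = e`,
`vu = e'`, `f(x) = u x v` for all `x ∈ e'Re'`, and `f⁻¹(y) = v y u` for all `y ∈ eRe`. -/
def IsCornerInner {R : Type*} [Ring R] (f : R ≃+* R) : Prop :=
  ∃ e : R, IsIdempotentElem e ∧ e ≠ 0 ∧
    ∃ u v : R, u = e * u * f.symm e ∧ v = f.symm e * v * e ∧
      u * v = e ∧ v * u = f.symm e ∧
      (∀ x : R, f (f.symm e * x * f.symm e) = u * (f.symm e * x * f.symm e) * v) ∧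
      (∀ y : R, f.symm (e * y * e) = v * (e * y * e) * u)

/-!
Every `G`-invariant ideal `I` of `R` extends to the ideal of `R *_α G` of elements with all
coefficients in `I`, and every ideal `J` of `R *_α G` restricts to the `G`-invariant ideal
`ι⁻¹ J` of `R`. What has to be shown is that a nonzero ideal `J` meets `R` nontrivially. Take a
nonzero `a ∈ J` with the fewest nonzero coefficients, translated so that `a₁ ≠ 0`. By minimality,
`r a₁ s = r' a₁ s'` forces `r a_g α_g(s) = r' a_g α_g(s')`: the difference of
`ι r * a * ι s` and `ι r' * a * ι s'` lies in `J` and its support misses `1`. If `a_g ≠ 0`,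
von Neumann regularity turns this relation into a corner-inner presentation of `α_g`, so `g = 1`
and `a ∈ ι R`.
-/

section CornerInner

variable {R : Type*} [Ring R]

theorem isCornerInner_of_conj {f : R ≃+* R} {p u v : R} (hp : IsIdempotentElem p) (hp0 : p ≠ 0)
    (hup : u * p = u) (hpv : p * v = v) (huv : u * v = f p) (hvu : v * u = p)
    (hconj : ∀ x, f (p * x * p) = u * (p * x * p) * v) : IsCornerInner f := by
  have hfpu : f p * u = u := by rw [← huv, mul_assoc, hvu, hup]
  have hvfp : v * f p = v := by rw [← huv, ← mul_assoc, hvu, hpv]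
  refine ⟨f p, hp.map f, EmbeddingLike.map_ne_zero_iff.2 hp0, u, v, ?_⟩
  simp only [RingEquiv.symm_apply_apply]
  refine ⟨by rw [hfpu, hup], by rw [mul_assoc, hvfp, hpv], huv, hvu, hconj, fun y => ?_⟩
  rw [RingEquiv.symm_apply_eq, eq_comm]
  calc f (v * (f p * y * f p) * u) = f (p * (v * (f p * y * f p) * u) * p) := by
        rw [show p * (v * (f p * y * f p) * u) * p = p * v * (f p * y * f p) * (u * p) by
          simp only [mul_assoc], hpv, hup]
    _ = u * v * (f p * y * f p) * (u * v) := by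
        rw [hconj, show u * (p * (v * (f p * y * f p) * u) * p) * v
          = u * p * v * (f p * y * f p) * (u * p * v) by simp only [mul_assoc], hup]
    _ = f p * y * f p := by
        rw [huv, show f p * (f p * y * f p) * f p = f p * f p * y * (f p * f p) by
          simp only [mul_assoc], (hp.map f).eq]

def Intertwines (f : R ≃+* R) (t w : R) : Prop :=
  ∀ r s r' s' : R, r * t * s = r' * t * s' → r * w * f s = r' * w * f s'

theorem Intertwines.mul_mul {f : R ≃+* R} {t w : R} (h : Intertwines f t w) (a b : R) :
    Intertwines f (a * t * b) (a * w * f b) := by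
  intro r s r' s' hrs
  simpa only [mul_assoc, map_mul] using
    h (r * a) (b * s) (r' * a) (b * s') (by simpa only [mul_assoc] using hrs)

theorem Intertwines.isCornerInner_of_mul_mul_eq_self {f : R ≃+* R} {t w x y : R}
    (h : Intertwines f t w) (hw : w ≠ 0) (hwyt : w * y * t = t) (htf : t * f.symm (y * w) = t)
    (htxt : t * x * t = t) : IsCornerInner f := by
  have htxw : t * x * w = w := by
    simpa only [mul_one, one_mul, map_one] using
      h (t * x) 1 1 1 (by rw [htxt, mul_one, one_mul, mul_one])
  have hwf : ∀ r, w * f (x * r * t) = t * x * r * w := fun r => by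
    simpa only [mul_one, one_mul, map_one] using
      h 1 (x * r * t) (t * x * r) 1 (by simp only [mul_assoc, one_mul, mul_one])
  have hp : IsIdempotentElem (x * t) := by
    rw [IsIdempotentElem, mul_assoc, ← mul_assoc t, htxt]
  have hwfp : w * f (x * t) = w := by
    have := hwf (t * x)
    rwa [show x * (t * x) * t = x * t by rw [mul_assoc, htxt],
      show t * x * (t * x) * w = w by rw [← mul_assoc, htxt, htxw]] at this
  have hfpyw : f (x * t) * (y * w) = f (x * t) := by
    rw [← f.apply_symm_apply (y * w), ← map_mul, mul_assoc, htf]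
  refine isCornerInner_of_conj (u := f (x * t) * y * t) (v := x * w) hp ?_ ?_ ?_ ?_ ?_ ?_
  · intro hp0
    rw [← hwfp, hp0, map_zero, mul_zero] at hw
    exact hw rfl
  · rw [mul_assoc, ← mul_assoc t, htxt]
  · rw [mul_assoc, ← mul_assoc t, htxw]
  · rw [show f (x * t) * y * t * (x * w) = f (x * t) * (y * (t * x * w)) by simp only [mul_assoc],
      htxw, hfpyw]
  · rw [show x * w * (f (x * t) * y * t) = x * (w * f (x * t) * y * t) by simp only [mul_assoc],
      hwfp, hwyt]
  · intro z
    calc f (x * t * z * (x * t))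
        = f (x * t) * (y * w) * f (x * t * z * (x * t)) := by
          rw [hfpyw, ← map_mul, show x * t * (x * t * z * (x * t))
            = x * t * (x * t) * z * (x * t) by simp only [mul_assoc], hp.eq]
      _ = f (x * t) * y * (w * f (x * (t * z * x) * t)) := by simp only [mul_assoc]
      _ = f (x * t) * y * (t * x * t * z * x * w) := by rw [hwf]; simp only [mul_assoc]
      _ = f (x * t) * y * (t * x * t) * z * x * (t * x * w) := by
          rw [htxt, htxw]; simp only [mul_assoc]
      _ = f (x * t) * y * t * (x * t * z * (x * t)) * (x * w) := by simp only [mul_assoc]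

theorem Intertwines.isCornerInner (hreg : ∀ a : R, ∃ x : R, a * x * a = a) {f : R ≃+* R}
    {t w : R} (h : Intertwines f t w) (hw : w ≠ 0) : IsCornerInner f := by
  obtain ⟨y, hy⟩ := hreg w
  have hwy : IsIdempotentElem (w * y) := by rw [IsIdempotentElem, ← mul_assoc, hy]
  have hyw : IsIdempotentElem (y * w) := by rw [IsIdempotentElem, mul_assoc, ← mul_assoc w, hy]
  have h' : Intertwines f (w * y * t * f.symm (y * w)) w := by
    simpa only [RingEquiv.apply_symm_apply, ← mul_assoc, hy] using
      h.mul_mul (w * y) (f.symm (y * w))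
  obtain ⟨x, hx⟩ := hreg (w * y * t * f.symm (y * w))
  refine h'.isCornerInner_of_mul_mul_eq_self (y := y) hw ?_ ?_ hx
  · simp only [← mul_assoc, hwy.eq]
  · rw [mul_assoc, ← map_mul, hyw.eq]

end CornerInner

namespace IsSkewGroupRing

variable {R : Type*} [Ring R] {G : Type*} [Group G] {α : G →* RingAut R}
  {S : Type*} [Ring S] {ι : R →+* S} {σ : G →* S}

noncomputable def coeff (hS : IsSkewGroupRing R G α S ι σ) : S ≃+ (G →₀ R) :=
  (AddEquiv.ofBijective (Finsupp.liftAddHom fun g => (AddMonoidHom.mulRight (σ g)).comp ι)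
    ((Function.bijective_iff_existsUnique _).2 fun s => by
      simp only [eq_comm (b := s)]; exact hS.repr_existsUnique s)).symm

theorem coeff_symm_single (hS : IsSkewGroupRing R G α S ι σ) (g : G) (r : R) :
    hS.coeff.symm (Finsupp.single g r) = ι r * σ g := by
  simp [coeff]

theorem coeff_iota_mul_sigma (hS : IsSkewGroupRing R G α S ι σ) (r : R) (g : G) :
    hS.coeff (ι r * σ g) = Finsupp.single g r := by
  rw [← hS.coeff_symm_single, AddEquiv.apply_symm_apply]

theorem coeff_iota (hS : IsSkewGroupRing R G α S ι σ) (r : R) :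
    hS.coeff (ι r) = Finsupp.single 1 r := by
  simpa only [map_one, mul_one] using hS.coeff_iota_mul_sigma r 1

@[elab_as_elim]
theorem induction_on (hS : IsSkewGroupRing R G α S ι σ) {P : S → Prop} (s : S) (zero : P 0)
    (add : ∀ a b, P a → P b → P (a + b)) (iota_mul_sigma : ∀ r g, P (ι r * σ g)) : P s := by
  rw [← hS.coeff.symm_apply_apply s]
  induction hS.coeff s using Finsupp.induction_linear with
  | zero => rwa [map_zero]
  | add c d hc hd => rw [map_add]; exact add _ _ hc hd
  | single g r => rw [coeff_symm_single]; exact iota_mul_sigma r g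

theorem coeff_iota_mul (hS : IsSkewGroupRing R G α S ι σ) (r : R) (s : S) :
    hS.coeff (ι r * s) = r • hS.coeff s := by
  induction s using hS.induction_on with
  | zero => simp only [mul_zero, map_zero, smul_zero]
  | add a b ha hb => rw [mul_add, map_add, map_add, ha, hb, smul_add]
  | iota_mul_sigma a g =>
    rw [← mul_assoc, ← map_mul, coeff_iota_mul_sigma, coeff_iota_mul_sigma, Finsupp.smul_single,
      smul_eq_mul]

theorem coeff_mul_iota (hS : IsSkewGroupRing R G α S ι σ) (s : S) (r : R) (g : G) :
    hS.coeff (s * ι r) g = hS.coeff s g * α g r := by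
  induction s using hS.induction_on with
  | zero => simp only [zero_mul, map_zero, Finsupp.coe_zero, Pi.zero_apply]
  | add a b ha hb => rw [add_mul, map_add, map_add, Finsupp.add_apply, Finsupp.add_apply, ha, hb,
      add_mul]
  | iota_mul_sigma a h =>
    rw [mul_assoc, hS.commutes, ← mul_assoc, ← map_mul, coeff_iota_mul_sigma, coeff_iota_mul_sigma]
    by_cases hhg : h = g
    · subst hhg
      rw [Finsupp.single_eq_same, Finsupp.single_eq_same]
    · simp only [Finsupp.single_eq_of_ne' hhg, zero_mul]

theorem coeff_mul_sigma_apply (hS : IsSkewGroupRing R G α S ι σ) (s : S) (h g : G) :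
    hS.coeff (s * σ h) g = hS.coeff s (g * h⁻¹) := by
  induction s using hS.induction_on with
  | zero => simp only [zero_mul, map_zero, Finsupp.coe_zero, Pi.zero_apply]
  | add a b ha hb => rw [add_mul, map_add, map_add, Finsupp.add_apply, Finsupp.add_apply, ha, hb]
  | iota_mul_sigma a k =>
    rw [mul_assoc, ← map_mul, coeff_iota_mul_sigma, coeff_iota_mul_sigma]
    classical
    simp only [Finsupp.single_apply, eq_mul_inv_iff_mul_eq]

theorem coeff_mul_sigma (hS : IsSkewGroupRing R G α S ι σ) (s : S) (h : G) :
    hS.coeff (s * σ h) = (hS.coeff s).equivMapDomain (Equiv.mulRight h) :=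
  Finsupp.ext fun g => by
    rw [coeff_mul_sigma_apply, Finsupp.equivMapDomain_apply, Equiv.mulRight_symm]; rfl

theorem coeff_sigma_mul_apply (hS : IsSkewGroupRing R G α S ι σ) (h : G) (s : S) (g : G) :
    hS.coeff (σ h * s) g = α h (hS.coeff s (h⁻¹ * g)) := by
  induction s using hS.induction_on with
  | zero => simp only [mul_zero, map_zero, Finsupp.coe_zero, Pi.zero_apply]
  | add a b ha hb => rw [mul_add, map_add, map_add, Finsupp.add_apply, Finsupp.add_apply, ha, hb,
      map_add]
  | iota_mul_sigma a k =>
    rw [← mul_assoc, hS.commutes, mul_assoc, ← map_mul, coeff_iota_mul_sigma, coeff_iota_mul_sigma]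
    classical
    simp only [Finsupp.single_apply, eq_inv_mul_iff_mul_eq, apply_ite (α h), map_zero]

theorem iota_injective (hS : IsSkewGroupRing R G α S ι σ) : Function.Injective ι :=
  fun a b h => Finsupp.single_injective (1 : G) <| by
    simpa only [coeff_iota] using congrArg hS.coeff h

theorem iota_apply_eq_conj (hS : IsSkewGroupRing R G α S ι σ) (g : G) (r : R) :
    ι (α g r) = σ g * ι r * σ g⁻¹ := by
  rw [hS.commutes, mul_assoc, ← map_mul, mul_inv_cancel, map_one, mul_one]

theorem card_support_coeff_mul_sigma (hS : IsSkewGroupRing R G α S ι σ) (s : S) (h : G) :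
    (hS.coeff (s * σ h)).support.card = (hS.coeff s).support.card := by
  rw [coeff_mul_sigma]
  exact Finset.card_map _

theorem eq_iota_coeff_one (hS : IsSkewGroupRing R G α S ι σ) {s : S}
    (hs : (hS.coeff s).support ⊆ {1}) : s = ι (hS.coeff s 1) :=
  hS.coeff.injective (by rw [coeff_iota]; exact Finsupp.support_subset_singleton.1 hs)

def coeffIdeal (hS : IsSkewGroupRing R G α S ι σ) (I : TwoSidedIdeal R)
    (hI : ∀ g, ∀ r ∈ I, α g r ∈ I) : TwoSidedIdeal S :=
  .mk' {s | ∀ g, hS.coeff s g ∈ I}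
    (fun g => by rw [map_zero]; exact I.zero_mem)
    (fun ha hb g => by rw [map_add, Finsupp.add_apply]; exact I.add_mem (ha g) (hb g))
    (fun ha g => by rw [map_neg, Finsupp.neg_apply]; exact I.neg_mem (ha g))
    (fun {x y} hy => by
      induction x using hS.induction_on with
      | zero => intro g; rw [zero_mul, map_zero]; exact I.zero_mem
      | add a b ha hb =>
        intro g; rw [add_mul, map_add, Finsupp.add_apply]; exact I.add_mem (ha g) (hb g)
      | iota_mul_sigma r h =>
        intro g
        rw [mul_assoc, coeff_iota_mul, Finsupp.smul_apply, smul_eq_mul, coeff_sigma_mul_apply]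
        exact I.mul_mem_left r _ (hI h _ (hy _)))
    (fun {x y} hx => by
      induction y using hS.induction_on with
      | zero => intro g; rw [mul_zero, map_zero]; exact I.zero_mem
      | add a b ha hb =>
        intro g; rw [mul_add, map_add, Finsupp.add_apply]; exact I.add_mem (ha g) (hb g)
      | iota_mul_sigma r h =>
        intro g
        rw [← mul_assoc, coeff_mul_sigma_apply, coeff_mul_iota]
        exact I.mul_mem_right _ _ (hx _))

theorem mem_coeffIdeal (hS : IsSkewGroupRing R G α S ι σ) {I : TwoSidedIdeal R}
    {hI : ∀ g, ∀ r ∈ I, α g r ∈ I} {s : S} : s ∈ hS.coeffIdeal I hI ↔ ∀ g, hS.coeff s g ∈ I :=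
  TwoSidedIdeal.mem_mk' ..

theorem isGSimple (hS : IsSkewGroupRing R G α S ι σ) [IsSimpleRing S] : IsGSimple R α := by
  refine ⟨ι.domain_nontrivial, fun I hI => or_iff_not_imp_left.2 fun hI₀ => ?_⟩
  obtain ⟨r, hrI, hr₀ : r ≠ 0⟩ := SetLike.exists_of_lt (bot_lt_iff_ne_bot.2 hI₀)
  have hιr : ι r ∈ hS.coeffIdeal I hI := hS.mem_coeffIdeal.2 fun g => by
    classical
    rw [coeff_iota, Finsupp.single_apply]
    split_ifs
    exacts [hrI, I.zero_mem]
  have h1 := hS.mem_coeffIdeal.1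
    (IsSimpleRing.one_mem_of_ne_zero_mem _ ((map_ne_zero_iff ι hS.iota_injective).2 hr₀) hιr) 1
  rw [← map_one ι, coeff_iota, Finsupp.single_eq_same] at h1
  exact I.eq_top h1

theorem isCornerInner_of_card_support_minimal (hreg : ∀ a : R, ∃ x : R, a * x * a = a)
    (hS : IsSkewGroupRing R G α S ι σ) {J : TwoSidedIdeal S} {a : S} (haJ : a ∈ J)
    (ha₁ : hS.coeff a 1 ≠ 0)
    (hmin : ∀ b ∈ J, (hS.coeff b).support.card < (hS.coeff a).support.card → b = 0)
    {g : G} (hg : hS.coeff a g ≠ 0) : IsCornerInner (α g) := by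
  classical
  refine Intertwines.isCornerInner hreg (t := hS.coeff a 1) (fun r s r' s' hrs => ?_) hg
  set b := ι r * a * ι s - ι r' * a * ι s'
  have hb : ∀ h, hS.coeff b h = r * hS.coeff a h * α h s - r' * hS.coeff a h * α h s' :=
    fun h => by
      simp only [b, map_sub, Finsupp.sub_apply, coeff_mul_iota, coeff_iota_mul,
        Finsupp.smul_apply, smul_eq_mul]
  have hbJ : b ∈ J :=
    J.sub_mem (J.mul_mem_right _ _ (J.mul_mem_left _ _ haJ))
      (J.mul_mem_right _ _ (J.mul_mem_left _ _ haJ))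
  have hsupp : (hS.coeff b).support ⊆ (hS.coeff a).support.erase 1 := by
    intro h hh
    rw [Finsupp.mem_support_iff] at hh
    rw [Finset.mem_erase, Finsupp.mem_support_iff]
    refine ⟨?_, fun ha => hh ?_⟩
    · rintro rfl
      rw [hb, MonoidHom.map_one, RingAut.one_apply, RingAut.one_apply, hrs, sub_self] at hh
      exact hh rfl
    · rw [hb, ha, mul_zero, zero_mul, mul_zero, zero_mul, sub_self]
  have hb₀ : b = 0 := hmin b hbJ ((Finset.card_le_card hsupp).trans_lt
    (Finset.card_erase_lt_of_mem (Finsupp.mem_support_iff.2 ha₁)))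
  rw [← sub_eq_zero, ← hb, hb₀, map_zero, Finsupp.zero_apply]

theorem exists_iota_mem_of_ne_bot (hreg : ∀ a : R, ∃ x : R, a * x * a = a)
    (hcorner : ∀ g : G, IsCornerInner (α g) → g = 1) (hS : IsSkewGroupRing R G α S ι σ)
    {J : TwoSidedIdeal S} (hJ : J ≠ ⊥) : ∃ r ≠ 0, ι r ∈ J := by
  obtain ⟨a, ⟨haJ, ha₀⟩, hmin⟩ := (measure fun s => (hS.coeff s).support.card).wf.has_min
    {s | s ∈ J ∧ s ≠ 0} (SetLike.exists_of_lt (bot_lt_iff_ne_bot.2 hJ))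
  obtain ⟨h, hh⟩ := Finsupp.support_nonempty_iff.2 (hS.coeff.map_ne_zero_iff.2 ha₀)
  set b := a * σ h⁻¹
  have hbJ : b ∈ J := J.mul_mem_right _ _ haJ
  have hb₁ : hS.coeff b 1 ≠ 0 := by
    rwa [coeff_mul_sigma_apply, one_mul, inv_inv, ← Finsupp.mem_support_iff]
  have hbmin : ∀ c ∈ J, (hS.coeff c).support.card < (hS.coeff b).support.card → c = 0 := by
    intro c hcJ hc
    by_contra hc₀
    exact hmin c ⟨hcJ, hc₀⟩ (by rwa [card_support_coeff_mul_sigma] at hc)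
  have hsupp : (hS.coeff b).support ⊆ {1} := fun g hg => Finset.mem_singleton.2 <|
    hcorner g (isCornerInner_of_card_support_minimal hreg hS hbJ hb₁ hbmin
      (Finsupp.mem_support_iff.1 hg))
  exact ⟨hS.coeff b 1, hb₁, hS.eq_iota_coeff_one hsupp ▸ hbJ⟩

theorem isSimpleRing (hreg : ∀ a : R, ∃ x : R, a * x * a = a)
    (hcorner : ∀ g : G, IsCornerInner (α g) → g = 1) (hS : IsSkewGroupRing R G α S ι σ)
    (hR : IsGSimple R α) : IsSimpleRing S := by
  obtain ⟨_, hRsimple⟩ := hR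
  have : Nontrivial S := hS.iota_injective.nontrivial
  refine .of_eq_bot_or_eq_top fun J => or_iff_not_imp_left.2 fun hJ => ?_
  obtain ⟨r, hr₀, hrJ⟩ := exists_iota_mem_of_ne_bot hreg hcorner hS hJ
  have hinv : ∀ g, ∀ r ∈ TwoSidedIdeal.comap ι J, α g r ∈ TwoSidedIdeal.comap ι J :=
    fun g r hr => by
      rw [TwoSidedIdeal.mem_comap] at hr ⊢
      rw [hS.iota_apply_eq_conj]
      exact J.mul_mem_right _ _ (J.mul_mem_left _ _ hr)
  rcases hRsimple _ hinv with hbot | htop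
  · exact absurd ((TwoSidedIdeal.mem_bot _).1 (hbot ▸ (TwoSidedIdeal.mem_comap ι).2 hrJ)) hr₀
  · rw [← TwoSidedIdeal.one_mem_iff, ← map_one ι, ← TwoSidedIdeal.mem_comap, htop]
    trivial

end IsSkewGroupRing

/-- Suppose `R` is a von Neumann regular ring and `α` an action of a group `G` on `R`
such that `1` is the only element of `G` whose image under `α` is corner-inner. Then the
skew group ring `R*_α G` is simple if and only if `R` is `G`-simple. -/
theorem skewGroupRing_isSimpleRing_iff_isGSimple_of_not_cornerInner
    {R : Type*} [Ring R] (hreg : ∀ a : R, ∃ x : R, a * x * a = a)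
    {G : Type*} [Group G] (α : G →* RingAut R)
    (hcorner : ∀ g : G, IsCornerInner (α g) → g = 1)
    {S : Type*} [Ring S] (ι : R →+* S) (σ : G →* S)
    (hS : IsSkewGroupRing R G α S ι σ) :
    IsSimpleRing S ↔ IsGSimple R α :=
  ⟨fun _ => hS.isGSimple, hS.isSimpleRing hreg hcorner⟩
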